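/- arXiv:1609.08867 — 3 statements merged into one kernel-verified Lean document; each statement's English description precedes it below -/
import Mathlib

section
/- Let F : ℝ → ℝ be of class C¹ with F' < 0 everywhere, F(0) = 0, F(p) → +∞ as p → −∞ and F(p) → −∞ as p → +∞; let G be admissible for F, let E be a C¹ solution of E' = 1/G(−2F(E)) with E(0) = 0, let f : ℝ → ℝ be the C¹ function with f'(t) = −F(E(t)) and f(0)=0, and let g : ℝ → ℝ be a C¹ function with g(0) = 0, g'(0) = 0, g'(x) ≥ max(2x, ψ₁(x)) for x ≥ 0 and g'(x) ≤ min(2x, ψ₂(x)) for x ≤ 0, where ψ(t,x) = −F⁻¹(xE'(t) − F(E(t))) − E(t), ψ₁(x) = sup_{t∈ℝ} ψ(t,x), ψ₂(x) = inf_{t∈ℝ} ψ(t,x). Then the function φ(t,x) = f(t) + g(x) + xE(t) satisfies, for all t ∈ ℝ: ∂ₜφ(t,x) + F(∂ₓφ(t,x)) ≥ 0 whenever x ≤ 0, and ∂ₜφ(t,x) + F(∂ₓφ(t,x)) ≤ 0 whenever x ≥ 0. -/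
open Set Filter Topology

/-- `F⁻¹`, the inverse of the decreasing bijection `F`. -/
noncomputable def Finv (F : ℝ → ℝ) : ℝ → ℝ := Function.invFun F

/-- `G` is admissible for `F`: it is continuous, even, dominates
`max((−F⁻¹)', (−2F)⁻¹) > 0`, non-increasing on `(-∞,0]` and non-decreasing on `[0,∞)`. -/
def Admissible (F G : ℝ → ℝ) : Prop :=
  Continuous G ∧
  (∀ x : ℝ, 0 < max (deriv (fun y => -(Finv F y)) x)
      (Function.invFun (fun p => -2 * F p) x)) ∧
  (∀ x : ℝ, max (deriv (fun y => -(Finv F y)) x)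
      (Function.invFun (fun p => -2 * F p) x) ≤ G x) ∧
  (∀ t : ℝ, G (-t) = G t) ∧
  AntitoneOn G (Iic 0) ∧ MonotoneOn G (Ici 0)

/-- `ψ(t,x) = −F⁻¹(x E'(t) − F(E(t))) − E(t)`. -/
noncomputable def psi (F E : ℝ → ℝ) (t x : ℝ) : ℝ :=
  -(Finv F (x * deriv E t - F (E t))) - E t

/-- `ψ₁(x) = sup_t ψ(t,x)` (in the extended reals). -/
noncomputable def psi1 (F E : ℝ → ℝ) (x : ℝ) : EReal :=
  ⨆ t : ℝ, (psi F E t x : EReal)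

/-- `ψ₂(x) = inf_t ψ(t,x)` (in the extended reals). -/
noncomputable def psi2 (F E : ℝ → ℝ) (x : ℝ) : EReal :=
  ⨅ t : ℝ, (psi F E t x : EReal)

/-- A continuous real function attaining values both below and above any real is surjective. -/
lemma surj_of_bounds {F : ℝ → ℝ} (hFc : Continuous F)
    (h1 : ∀ y : ℝ, ∃ a, F a ≤ y) (h2 : ∀ y : ℝ, ∃ b, y ≤ F b) :
    Function.Surjective F := by
  intro y
  obtain ⟨a, ha⟩ := h1 y
  obtain ⟨b, hb⟩ := h2 y
  rcases le_total a b with hab | hab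
  · obtain ⟨t, _, ht⟩ := intermediate_value_Icc hab hFc.continuousOn ⟨ha, hb⟩
    exact ⟨t, ht⟩
  · obtain ⟨t, _, ht⟩ := intermediate_value_Icc' hab hFc.continuousOn ⟨ha, hb⟩
    exact ⟨t, ht⟩

theorem stmt15 (F G E f g : ℝ → ℝ) (hF : ContDiff ℝ 1 F) (hF' : ∀ p, deriv F p < 0)
    (hF0 : F 0 = 0) (hFbot : Tendsto F atBot atTop) (hFtop : Tendsto F atTop atBot)
    (hG : Admissible F G)
    (hE : ContDiff ℝ 1 E) (hE0 : E 0 = 0)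
    (hE' : ∀ t : ℝ, deriv E t = 1 / G (-2 * F (E t)))
    (hf : ContDiff ℝ 1 f) (hf0 : f 0 = 0) (hf' : ∀ t : ℝ, deriv f t = -F (E t))
    (hg : ContDiff ℝ 1 g) (hg0 : g 0 = 0) (hg'0 : deriv g 0 = 0)
    (hg1 : ∀ x : ℝ, 0 ≤ x →
      max ((2 * x : ℝ) : EReal) (psi1 F E x) ≤ ((deriv g x : ℝ) : EReal))
    (hg2 : ∀ x : ℝ, x ≤ 0 →
      ((deriv g x : ℝ) : EReal) ≤ min ((2 * x : ℝ) : EReal) (psi2 F E x)) :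
    (∀ t x : ℝ, x ≤ 0 →
      0 ≤ (deriv f t + x * deriv E t) + F (deriv g x + E t)) ∧
    (∀ t x : ℝ, 0 ≤ x →
      (deriv f t + x * deriv E t) + F (deriv g x + E t) ≤ 0) := by
  obtain ⟨hGc, hGpos', hGge, hGev, hGanti, hGmono⟩ := hG
  have hGpos : ∀ x, 0 < G x := fun x => lt_of_lt_of_le (hGpos' x) (hGge x)
  have hFc : Continuous F := hF.continuous
  have hFanti : StrictAnti F := strictAnti_of_deriv_neg hF'
  have hFsurj : Function.Surjective F := by
    apply surj_of_bounds hFc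
    · intro y; exact (hFtop.eventually (eventually_le_atBot y)).exists
    · intro y; exact (hFbot.eventually (eventually_ge_atTop y)).exists
  have hFinv_right : ∀ y, F (Finv F y) = y := fun y => Function.invFun_eq (hFsurj y)
  have hEc : Continuous E := hE.continuous
  have hEdiff : Differentiable ℝ E := hE.differentiable one_ne_zero
  have hE'pos : ∀ t, 0 < deriv E t := by
    intro t; rw [hE' t]; exact one_div_pos.mpr (hGpos _)
  have hEmono : StrictMono E := strictMono_of_deriv_pos hE'pos
  -- E is unbounded above
  have hEup : ∀ y : ℝ, ∃ t, y ≤ E t := by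
    intro y
    by_contra hcon
    push_neg at hcon
    set M := max y 0 with hM
    have hM0 : 0 ≤ M := le_max_right _ _
    have hEM : ∀ t, E t ≤ M := fun t => (hcon t).le.trans (le_max_left _ _)
    set C := G (-2 * F M) with hC
    have hCpos : 0 < C := hGpos _
    have hFM0 : F M ≤ 0 := hF0 ▸ hFanti.antitone hM0
    have key : ∀ t : ℝ, 0 ≤ t → 1 / C ≤ deriv E t := by
      intro t ht
      rw [hE' t]
      apply one_div_le_one_div_of_le (hGpos _)
      have hEt0 : 0 ≤ E t := hE0 ▸ hEmono.monotone ht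
      have h1 : F (E t) ≤ 0 := hF0 ▸ hFanti.antitone hEt0
      have h2 : F M ≤ F (E t) := hFanti.antitone (hEM t)
      exact hGmono (mem_Ici.mpr (by linarith)) (mem_Ici.mpr (by linarith)) (by linarith)
    have hmono : MonotoneOn (fun t => E t - t / C) (Ici (0:ℝ)) := by
      apply monotoneOn_of_deriv_nonneg (convex_Ici 0)
      · exact (hEc.sub (continuous_id.div_const C)).continuousOn
      · intro t _
        exact ((hEdiff t).sub ((differentiable_id.div_const C) t)).differentiableWithinAt
      · intro t ht
        rw [interior_Ici] at ht
        rw [deriv_fun_sub (f := E) (g := fun t => t / C) (hEdiff t) (by fun_prop), deriv_div_const, deriv_id'']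
        have := key t ht.le
        linarith
    have h5 := hmono (mem_Ici.mpr le_rfl) (mem_Ici.mpr (by positivity : (0:ℝ) ≤ C * (M + 1)))
      (by positivity)
    simp only [hE0, zero_div, sub_zero] at h5
    have h6 : C * (M + 1) / C = M + 1 := by field_simp
    rw [h6] at h5
    have := hEM (C * (M + 1))
    linarith
  -- E is unbounded below
  have hEdown : ∀ y : ℝ, ∃ t, E t ≤ y := by
    intro y
    by_contra hcon
    push_neg at hcon
    set m := min y 0 with hm
    have hm0 : m ≤ 0 := min_le_right _ _
    have hEm : ∀ t, m ≤ E t := fun t => (min_le_left y 0).trans (hcon t).le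
    set C := G (-2 * F m) with hC
    have hCpos : 0 < C := hGpos _
    have hFm0 : 0 ≤ F m := hF0 ▸ hFanti.antitone hm0
    have key : ∀ t : ℝ, t ≤ 0 → 1 / C ≤ deriv E t := by
      intro t ht
      rw [hE' t]
      apply one_div_le_one_div_of_le (hGpos _)
      have hEt0 : E t ≤ 0 := hE0 ▸ hEmono.monotone ht
      have h1 : 0 ≤ F (E t) := hF0 ▸ hFanti.antitone hEt0
      have h2 : F (E t) ≤ F m := hFanti.antitone (hEm t)
      exact hGanti (mem_Iic.mpr (by linarith)) (mem_Iic.mpr (by linarith)) (by linarith)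
    have hmono : MonotoneOn (fun t => E t - t / C) (Iic (0:ℝ)) := by
      apply monotoneOn_of_deriv_nonneg (convex_Iic 0)
      · exact (hEc.sub (continuous_id.div_const C)).continuousOn
      · intro t _
        exact ((hEdiff t).sub ((differentiable_id.div_const C) t)).differentiableWithinAt
      · intro t ht
        rw [interior_Iic] at ht
        rw [deriv_fun_sub (f := E) (g := fun t => t / C) (hEdiff t) (by fun_prop), deriv_div_const, deriv_id'']
        have := key t ht.le
        linarith
    have hneg : C * (m - 1) ≤ 0 := by nlinarith
    have h5 := hmono (mem_Iic.mpr hneg) (mem_Iic.mpr le_rfl) hneg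
    simp only [hE0, zero_div, sub_zero] at h5
    have h6 : C * (m - 1) / C = m - 1 := by field_simp
    rw [h6] at h5
    have := hEm (C * (m - 1))
    linarith
  have hEsurj : Function.Surjective E := surj_of_bounds hEc hEdown hEup
  -- psi t 0 = 0 for all t
  have hpsi0 : ∀ t : ℝ, psi F E t 0 = 0 := by
    intro t
    have h1 : psi F E t 0 ≤ 0 := by
      have h := hg1 0 le_rfl
      rw [hg'0] at h
      have h2 : psi1 F E 0 ≤ ((0:ℝ) : EReal) := le_trans (le_max_right _ _) h
      have h3 : ((psi F E t 0 : ℝ) : EReal) ≤ ((0:ℝ) : EReal) :=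
        le_trans (le_iSup (fun t => ((psi F E t 0 : ℝ) : EReal)) t) h2
      exact EReal.coe_le_coe_iff.mp h3
    have h2 : 0 ≤ psi F E t 0 := by
      have h := hg2 0 le_rfl
      rw [hg'0] at h
      have h2 : ((0:ℝ) : EReal) ≤ psi2 F E 0 := le_trans h (min_le_right _ _)
      have h3 : ((0:ℝ) : EReal) ≤ ((psi F E t 0 : ℝ) : EReal) :=
        le_trans h2 (iInf_le (fun t => ((psi F E t 0 : ℝ) : EReal)) t)
      exact EReal.coe_le_coe_iff.mp h3
    linarith
  -- F is odd
  have hodd : ∀ u : ℝ, F (-u) = -F u := by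
    intro u
    obtain ⟨t, rfl⟩ := hEsurj u
    have h := hpsi0 t
    unfold psi at h
    rw [zero_mul, zero_sub] at h
    have h2 : Finv F (-F (E t)) = -E t := by linarith
    calc F (-E t) = F (Finv F (-F (E t))) := by rw [h2]
    _ = -F (E t) := hFinv_right _
  have keyF : ∀ z : ℝ, F (-(Finv F z)) = -z := by
    intro z; rw [hodd, hFinv_right]
  constructor
  · intro t x hx
    have hψ : deriv g x ≤ psi F E t x := by
      have h := hg2 x hx
      have h2 : ((deriv g x : ℝ) : EReal) ≤ ((psi F E t x : ℝ) : EReal) :=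
        le_trans (h.trans (min_le_right _ _)) (iInf_le (fun t => ((psi F E t x : ℝ) : EReal)) t)
      exact EReal.coe_le_coe_iff.mp h2
    unfold psi at hψ
    have h4 : F (-(Finv F (x * deriv E t - F (E t)))) ≤ F (deriv g x + E t) :=
      hFanti.antitone (by linarith)
    rw [keyF] at h4
    rw [hf' t]
    linarith
  · intro t x hx
    have hψ : psi F E t x ≤ deriv g x := by
      have h := hg1 x hx
      have h2 : ((psi F E t x : ℝ) : EReal) ≤ ((deriv g x : ℝ) : EReal) :=
        le_trans (le_trans (le_iSup (fun t => ((psi F E t x : ℝ) : EReal)) t) (le_max_right _ _)) h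
      exact EReal.coe_le_coe_iff.mp h2
    unfold psi at hψ
    have h4 : F (deriv g x + E t) ≤ F (-(Finv F (x * deriv E t - F (E t)))) :=
      hFanti.antitone (by linarith)
    rw [keyF] at h4
    rw [hf' t]
    linarith
end

section
/- Let F : ℝ → ℝ be of class C¹ with F' < 0 everywhere, F(0) = 0, F(p) → +∞ as p → −∞ and F(p) → −∞ as p → +∞; let G be admissible for F, let E be a C¹ solution of E' = 1/G(−2F(E)) with E(0) = 0, let f : ℝ → ℝ be the C¹ function with f'(t) = −F(E(t)) and f(0)=0, and let g : ℝ → ℝ be a C¹ function with g(0) = 0, g'(0) = 0, g'(x) ≥ max(2x, ψ₁(x)) for x ≥ 0 and g'(x) ≤ min(2x, ψ₂(x)) for x ≤ 0, where ψ(t,x) = −F⁻¹(xE'(t) − F(E(t))) − E(t), ψ₁(x) = sup_{t∈ℝ} ψ(t,x), ψ₂(x) = inf_{t∈ℝ} ψ(t,x). Then the function φ(t,x) = f(t) + g(x) + xE(t) satisfies φ(0,0) = 0 and φ(t,x) > 0 for every (t,x) ≠ (0,0). -/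
/-!
Both summands dominate squares: `g(x) ≥ x²` because `g' - 2x` has the sign of `x`, and
`f(t) ≥ E(t)²/2` because `(f - E²/2)' = -F(E) - E E'` has the sign of `t`. The latter amounts
to `|u| ≤ |F u| G(-2F u)`, which follows from `(-F⁻¹)' ≤ G` by integrating from `0` to `F u`
and bounding `∫₀^{F u} G` by `|F u| G(F u)` using that `G` is even and increases with `|·|`.
Hence `φ(t,x) ≥ E²/2 + x² + xE = (x + E/2)² + E²/4`, which vanishes only at `E(t) = x = 0`,
i.e. at `(t,x) = (0,0)` since `E` is strictly increasing.
-/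

open Set Filter Topology

theorem apply_zero_le_of_deriv_sign {h : ℝ → ℝ} (hd : Differentiable ℝ h)
    (hneg : ∀ t < 0, deriv h t ≤ 0) (hpos : ∀ t > 0, 0 ≤ deriv h t) (t : ℝ) : h 0 ≤ h t := by
  rcases le_total 0 t with ht | ht
  · refine monotoneOn_of_deriv_nonneg (convex_Ici 0) hd.continuous.continuousOn
      hd.differentiableOn (fun x hx => hpos x ?_) self_mem_Ici ht ht
    simpa using hx
  · refine antitoneOn_of_deriv_nonpos (convex_Iic 0) hd.continuous.continuousOn
      hd.differentiableOn (fun x hx => hneg x ?_) ht self_mem_Iic ht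
    simpa using hx

theorem antitone_sub_integral_of_deriv_le {ρ G : ℝ → ℝ} (hρ : Differentiable ℝ ρ)
    (hG : Continuous G) (hle : ∀ y, deriv ρ y ≤ G y) :
    Antitone fun y => ρ y - ∫ s in (0 : ℝ)..y, G s := by
  have hd : ∀ y, HasDerivAt (fun y => ρ y - ∫ s in (0 : ℝ)..y, G s) (deriv ρ y - G y) y :=
    fun y => (hρ y).hasDerivAt.sub (hG.integral_hasStrictDerivAt 0 y).hasDerivAt
  exact antitone_of_deriv_nonpos (fun y => (hd y).differentiableAt)
    fun y => by rw [(hd y).deriv]; linarith [hle y]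

theorem Function.Even.apply_le_apply_of_abs_le {G : ℝ → ℝ} (heven : Function.Even G)
    (hmono : MonotoneOn G (Ici 0)) {y z : ℝ} (h : |y| ≤ |z|) : G y ≤ G z := by
  have habs : ∀ t, G |t| = G t := fun t => by
    rcases abs_choice t with ht | ht
    · rw [ht]
    · rw [ht, heven]
  rw [← habs y, ← habs z]
  exact hmono (abs_nonneg y) (abs_nonneg z) h

theorem Function.Even.abs_integral_le_abs_mul {G : ℝ → ℝ} (heven : Function.Even G)
    (hmono : MonotoneOn G (Ici 0)) (hpos : ∀ t, 0 ≤ G t) (y : ℝ) :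
    |∫ s in (0 : ℝ)..y, G s| ≤ |y| * G y := by
  have hbound : ∀ s ∈ uIoc 0 y, ‖G s‖ ≤ G y := fun s hs => by
    rw [Real.norm_of_nonneg (hpos s)]
    refine heven.apply_le_apply_of_abs_le hmono ?_
    simpa using abs_sub_left_of_mem_uIcc (uIoc_subset_uIcc hs)
  simpa [mul_comm] using intervalIntegral.norm_integral_le_of_norm_le_const hbound

section Inverse

variable {F : ℝ → ℝ}

theorem apply_Finv (hsurj : Function.Surjective F) (y : ℝ) : F (Finv F y) = y :=
  Function.invFun_eq (hsurj y)

theorem Finv_apply (hF : StrictAnti F) (x : ℝ) : Finv F (F x) = x :=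
  Function.leftInverse_invFun hF.injective x

theorem continuous_Finv (hF : StrictAnti F) (hsurj : Function.Surjective F) :
    Continuous (Finv F) := by
  have hmono : Monotone fun y => Finv F (-y) := fun a b hab => by
    by_contra! h
    have := hF h
    rw [apply_Finv hsurj, apply_Finv hsurj] at this
    linarith
  have hsurj' : Function.Surjective fun y => Finv F (-y) :=
    fun x => ⟨-F x, by simp [Finv_apply hF]⟩
  convert (hmono.continuous_of_surjective hsurj').comp continuous_neg using 1
  ext y
  simp

theorem hasDerivAt_Finv (hd : Differentiable ℝ F) (hF' : ∀ p, deriv F p < 0)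
    (hsurj : Function.Surjective F) (y : ℝ) :
    HasDerivAt (Finv F) (deriv F (Finv F y))⁻¹ y :=
  HasDerivAt.of_local_left_inverse
    (continuous_Finv (strictAnti_of_deriv_neg hF') hsurj).continuousAt
    (hd _).hasDerivAt (hF' _).ne (Eventually.of_forall (apply_Finv hsurj))

end Inverse

section Admissible

variable {F G : ℝ → ℝ}

theorem Admissible.pos (hG : Admissible F G) (x : ℝ) : 0 < G x :=
  (hG.2.1 x).trans_le (hG.2.2.1 x)

theorem abs_le_abs_mul_of_admissible (hd : Differentiable ℝ F) (hF' : ∀ p, deriv F p < 0)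
    (hF0 : F 0 = 0) (hsurj : Function.Surjective F) (hG : Admissible F G) (u : ℝ) :
    |u| ≤ |F u| * G (-2 * F u) := by
  have hGpos := hG.pos
  obtain ⟨hGc, -, hGle, heven, -, hmono⟩ := hG
  replace heven : Function.Even G := heven
  have hanti : StrictAnti F := strictAnti_of_deriv_neg hF'
  set W : ℝ → ℝ := fun y => -Finv F y - ∫ s in (0 : ℝ)..y, G s
  have hW : Antitone W := antitone_sub_integral_of_deriv_le
    (fun y => (hasDerivAt_Finv hd hF' hsurj y).neg.differentiableAt) hGc
    (fun y => (le_max_left _ _).trans (hGle y))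
  have hW0 : W 0 = 0 := by simpa [W, hF0] using Finv_apply hanti 0
  have hWu : W (F u) = -u - ∫ s in (0 : ℝ)..F u, G s := by simp [W, Finv_apply hanti]
  have hint : |u| ≤ |∫ s in (0 : ℝ)..F u, G s| := by
    rcases le_total 0 u with hu | hu
    · have : W 0 ≤ W (F u) := hW (hF0 ▸ hanti.antitone hu)
      rw [abs_of_nonneg hu]
      linarith [neg_abs_le (∫ s in (0 : ℝ)..F u, G s)]
    · have : W (F u) ≤ W 0 := hW (hF0 ▸ hanti.antitone hu)
      rw [abs_of_nonpos hu]
      linarith [le_abs_self (∫ s in (0 : ℝ)..F u, G s)]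
  calc |u| ≤ |∫ s in (0 : ℝ)..F u, G s| := hint
    _ ≤ |F u| * G (F u) := heven.abs_integral_le_abs_mul hmono (fun t => (hGpos t).le) (F u)
    _ ≤ |F u| * G (-2 * F u) := by
      refine mul_le_mul_of_nonneg_left (heven.apply_le_apply_of_abs_le hmono ?_) (abs_nonneg _)
      rw [abs_mul, abs_neg, abs_two]
      linarith [abs_nonneg (F u)]

end Admissible

theorem sq_div_two_le_of_deriv {F G E f : ℝ → ℝ} (hF : StrictAnti F) (hF0 : F 0 = 0)
    (hGpos : ∀ x, 0 < G x) (hkey : ∀ u, |u| ≤ |F u| * G (-2 * F u))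
    (hE : Differentiable ℝ E) (hEmono : StrictMono E) (hE0 : E 0 = 0)
    (hE' : ∀ t, deriv E t = 1 / G (-2 * F (E t)))
    (hf : Differentiable ℝ f) (hf0 : f 0 = 0) (hf' : ∀ t, deriv f t = -F (E t)) (t : ℝ) :
    E t ^ 2 / 2 ≤ f t := by
  have hderiv : ∀ s, deriv (fun s => f s - E s ^ 2 / 2) s = -F (E s) - E s * deriv E s :=
    fun s => by
      refine ((hf s).hasDerivAt.sub (((hE s).hasDerivAt.pow 2).div_const 2)).deriv.trans ?_
      rw [hf']
      push_cast
      ring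
  have hquot : ∀ s, |E s| * deriv E s ≤ |F (E s)| := fun s => by
    rw [hE', mul_one_div, div_le_iff₀ (hGpos _)]
    exact hkey _
  have key := apply_zero_le_of_deriv_sign (h := fun s => f s - E s ^ 2 / 2)
    (hf.sub ((hE.pow 2).div_const 2)) ?_ ?_ t
  · simp only [hf0, hE0] at key
    linarith
  · intro s hs
    have hEs : E s < 0 := hE0 ▸ hEmono hs
    have hquot := hquot s
    rw [abs_of_neg hEs, abs_of_pos (hF0 ▸ hF hEs : 0 < F (E s))] at hquot
    rw [hderiv]
    linarith
  · intro s hs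
    have hEs : 0 < E s := hE0 ▸ hEmono hs
    have hquot := hquot s
    rw [abs_of_pos hEs, abs_of_neg (hF0 ▸ hF hEs : F (E s) < 0)] at hquot
    rw [hderiv]
    linarith

theorem sq_le_of_deriv {g : ℝ → ℝ} (hg : Differentiable ℝ g) (hg0 : g 0 = 0)
    (hneg : ∀ x ≤ 0, deriv g x ≤ 2 * x) (hpos : ∀ x, 0 ≤ x → 2 * x ≤ deriv g x) (x : ℝ) :
    x ^ 2 ≤ g x := by
  have hderiv : ∀ y, deriv (fun y => g y - y ^ 2) y = deriv g y - 2 * y := fun y => by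
    refine ((hg y).hasDerivAt.sub (hasDerivAt_pow 2 y)).deriv.trans ?_
    push_cast
    ring
  have key := apply_zero_le_of_deriv_sign (h := fun y => g y - y ^ 2)
    (hg.sub (differentiable_pow 2))
    (fun y hy => by rw [hderiv]; linarith [hneg y hy.le])
    (fun y hy => by rw [hderiv]; linarith [hpos y hy.le]) x
  simp only [hg0] at key
  linarith

theorem stmt17_general (F G E f g : ℝ → ℝ) (hF : ContDiff ℝ 1 F) (hF' : ∀ p, deriv F p < 0)
    (hF0 : F 0 = 0) (hFbot : Tendsto F atBot atTop) (hFtop : Tendsto F atTop atBot)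
    (hG : Admissible F G)
    (hE : ContDiff ℝ 1 E) (hE0 : E 0 = 0)
    (hE' : ∀ t : ℝ, deriv E t = 1 / G (-2 * F (E t)))
    (hf : ContDiff ℝ 1 f) (hf0 : f 0 = 0) (hf' : ∀ t : ℝ, deriv f t = -F (E t))
    (hg : ContDiff ℝ 1 g) (hg0 : g 0 = 0)
    (hg1 : ∀ x : ℝ, 0 ≤ x →
      max ((2 * x : ℝ) : EReal) (psi1 F E x) ≤ ((deriv g x : ℝ) : EReal))
    (hg2 : ∀ x : ℝ, x ≤ 0 →
      ((deriv g x : ℝ) : EReal) ≤ min ((2 * x : ℝ) : EReal) (psi2 F E x)) :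
    f 0 + g 0 + 0 * E 0 = 0 ∧
    (∀ t x : ℝ, (t, x) ≠ ((0 : ℝ), (0 : ℝ)) → 0 < f t + g x + x * E t) := by
  have hFd := hF.differentiable one_ne_zero
  have hsurj := hFd.continuous.surjective' hFbot hFtop
  have hEmono : StrictMono E :=
    strictMono_of_deriv_pos fun t => by rw [hE']; exact one_div_pos.mpr (hG.pos _)
  have hfE := sq_div_two_le_of_deriv (strictAnti_of_deriv_neg hF') hF0 hG.pos
    (abs_le_abs_mul_of_admissible hFd hF' hF0 hsurj hG) (hE.differentiable one_ne_zero)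
    hEmono hE0 hE' (hf.differentiable one_ne_zero) hf0 hf'
  have hgx := sq_le_of_deriv (hg.differentiable one_ne_zero) hg0
    (fun x hx => EReal.coe_le_coe_iff.mp ((hg2 x hx).trans (min_le_left _ _)))
    (fun x hx => EReal.coe_le_coe_iff.mp ((le_max_left _ _).trans (hg1 x hx)))
  refine ⟨by simp [hf0, hg0], fun t x hne => ?_⟩
  have hft := hfE t
  by_cases ht : E t = 0
  · have hx : x ≠ 0 := fun hx => hne (by rw [hEmono.injective (ht.trans hE0.symm), hx])
    rw [ht] at hft ⊢
    nlinarith [hgx x, sq_pos_of_ne_zero hx]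
  · nlinarith [hgx x, sq_pos_of_ne_zero ht, sq_nonneg (x + E t / 2)]

theorem stmt17 (F G E f g : ℝ → ℝ) (hF : ContDiff ℝ 1 F) (hF' : ∀ p, deriv F p < 0)
    (hF0 : F 0 = 0) (hFbot : Tendsto F atBot atTop) (hFtop : Tendsto F atTop atBot)
    (hG : Admissible F G)
    (hE : ContDiff ℝ 1 E) (hE0 : E 0 = 0)
    (hE' : ∀ t : ℝ, deriv E t = 1 / G (-2 * F (E t)))
    (hf : ContDiff ℝ 1 f) (hf0 : f 0 = 0) (hf' : ∀ t : ℝ, deriv f t = -F (E t))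
    (hg : ContDiff ℝ 1 g) (hg0 : g 0 = 0) (hg'0 : deriv g 0 = 0)
    (hg1 : ∀ x : ℝ, 0 ≤ x →
      max ((2 * x : ℝ) : EReal) (psi1 F E x) ≤ ((deriv g x : ℝ) : EReal))
    (hg2 : ∀ x : ℝ, x ≤ 0 →
      ((deriv g x : ℝ) : EReal) ≤ min ((2 * x : ℝ) : EReal) (psi2 F E x)) :
    f 0 + g 0 + 0 * E 0 = 0 ∧
    (∀ t x : ℝ, (t, x) ≠ ((0 : ℝ), (0 : ℝ)) → 0 < f t + g x + x * E t) :=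
  stmt17_general F G E f g hF hF' hF0 hFbot hFtop hG hE hE0 hE' hf hf0 hf' hg hg0 hg1 hg2
end

section
/- Let H : ℝ → ℝ be continuous and coercive, and define H⁻(p) = inf_{q ≤ p} H(q). Then the set A_{H⁻} associated to the continuous non-increasing function H⁻ equals the set A₀ of all points p ∈ ℝ such that p⁻ = p < p⁺ and for every q ∈ ℝ with (q⁻, q⁺) ∩ (p, p⁺) ≠ ∅ one has H(q) ≥ H(p). -/
open Set Filter Topology

/-- `p⁻ = sup {q < p : H(q) ≥ H(p)}`. -/
noncomputable def pminus (H : ℝ → ℝ) (p : ℝ) : ℝ :=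
  sSup {q : ℝ | q < p ∧ H p ≤ H q}

/-- `p⁺ = inf {q > p : H(q) ≤ H(p)}`, with `inf ∅ = +∞` (extended reals). -/
noncomputable def pplus (H : ℝ → ℝ) (p : ℝ) : EReal :=
  sInf (Real.toEReal '' {q : ℝ | p < q ∧ H q ≤ H p})

/-- `H(p) → +∞` as `|p| → +∞`. -/
def Coercive (H : ℝ → ℝ) : Prop :=
  Tendsto H atTop atTop ∧ Tendsto H atBot atTop

/-- `F(p) → +∞` as `p → -∞`. -/
def SemiCoercive (F : ℝ → ℝ) : Prop := Tendsto F atBot atTop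

/-- the open interval `(a⁻, a⁺)` (upper endpoint possibly `+∞`). -/
def ooMM (H : ℝ → ℝ) (a : ℝ) : Set ℝ :=
  {r : ℝ | pminus H a < r ∧ (r : EReal) < pplus H a}

/-- the open interval `(p, p⁺)` (upper endpoint possibly `+∞`). -/
def ooUp (H : ℝ → ℝ) (p : ℝ) : Set ℝ :=
  {r : ℝ | p < r ∧ (r : EReal) < pplus H p}

/-- the closed interval `[a⁻, a⁺]` (upper endpoint possibly `+∞`). -/
def ccMM (H : ℝ → ℝ) (a : ℝ) : Set ℝ :=
  {r : ℝ | pminus H a ≤ r ∧ (r : EReal) ≤ pplus H a}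

/-- `A` is a set limiter for `H`. -/
def IsSetLimiter (H : ℝ → ℝ) (A : Set ℝ) : Prop :=
  (∀ a ∈ A, (pminus H a : EReal) ≠ pplus H a) ∧
  (∀ a ∈ A, ∀ b ∈ A, a < b → H b ≤ H a) ∧
  (∀ p : ℝ, pminus H p < p → ∃ a ∈ A, (Ioo (pminus H p) p ∩ ooMM H a).Nonempty) ∧
  (∀ p : ℝ, (p : EReal) < pplus H p → ∃ a ∈ A, (ooUp H p ∩ ooMM H a).Nonempty)

open Classical in
/-- The `A`-limited flux function `F_A`: equal to `H(a)` on `[a⁻, a⁺]` for `a ∈ A`,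
and to `H` elsewhere. -/
noncomputable def limFlux (H : ℝ → ℝ) (A : Set ℝ) (p : ℝ) : ℝ :=
  if h : ∃ a, a ∈ A ∧ p ∈ ccMM H a then H h.choose else H p

/-- Condition (S) in the definition of `A_F`. -/
def CondS (H F : ℝ → ℝ) (p : ℝ) : Prop :=
  pminus H p ≠ p ∧ H p ≤ F p ∧
    ∀ q : ℝ, H q ≤ F q → (ooMM H q ∩ Ioo (pminus H p) p).Nonempty → H q ≤ H p

/-- Condition (T) in the definition of `A_F`. -/
def CondT (H F : ℝ → ℝ) (p : ℝ) : Prop :=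
  (p : EReal) ≠ pplus H p ∧ F p ≤ H p ∧
    ∀ q : ℝ, F q ≤ H q → (ooMM H q ∩ ooUp H p).Nonempty → H p ≤ H q

/-- The set `A_F` associated with a boundary function `F`. -/
def limiterOf (H F : ℝ → ℝ) : Set ℝ := {p : ℝ | CondS H F p ∨ CondT H F p}

/-- `H⁻(p) = inf_{q ≤ p} H(q)`. -/
noncomputable def Hminus (H : ℝ → ℝ) (p : ℝ) : ℝ := sInf (H '' Iic p)

/-- The set `A₀` of points `p` with `p⁻ = p < p⁺` such that every `q` with
`(q⁻, q⁺) ∩ (p, p⁺) ≠ ∅` satisfies `H(q) ≥ H(p)`. -/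
def setA0 (H : ℝ → ℝ) : Set ℝ :=
  {p : ℝ | pminus H p = p ∧ (p : EReal) < pplus H p ∧
    ∀ q : ℝ, (ooMM H q ∩ ooUp H p).Nonempty → H p ≤ H q}

/-!
Since `H⁻ ≤ H`, condition (T) for `F = H⁻` says exactly that `p < p⁺` and `H(q) ≥ H(p)` whenever
`(q⁻, q⁺)` meets `(p, p⁺)`, while (S) would force `H(p) ≤ H(q)` for all `q ≤ p`, i.e. `p⁻ = p`,
which (S) excludes. It remains to see that (T) forces `p⁻ = p`. Otherwise `H < H(p)` just left of
`p` and `H > H(p)` on `(p, p⁺)`; the rightmost minimiser `q` of `H` on a small interval `[m, p']`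
around `p` then lies left of `p` and has `q⁺ ≥ p'`, so `(q⁻, q⁺)` meets `(p, p⁺)` although
`H(q) < H(p)`.
-/

variable {H F : ℝ → ℝ} {p q : ℝ}

lemma ContinuousOn.exists_rightmost_isMinOn_Icc {a b : ℝ} (hH : ContinuousOn H (Icc a b))
    (hab : a ≤ b) : ∃ q ∈ Icc a b, IsMinOn H (Icc a b) q ∧ ∀ r ∈ Ioc q b, H q < H r := by
  obtain ⟨q₀, hq₀, hmin⟩ := isCompact_Icc.exists_isMinOn (nonempty_Icc.mpr hab) hH
  have hclosed := hH.preimage_isClosed_of_isClosed isClosed_Icc (isClosed_singleton (x := H q₀))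
  obtain ⟨q, ⟨hq, hHq⟩, hgreatest⟩ :=
    (isCompact_Icc.of_isClosed_subset hclosed inter_subset_left).exists_isGreatest ⟨q₀, hq₀, rfl⟩
  have hHq : H q = H q₀ := hHq
  refine ⟨q, hq, fun x hx => hHq ▸ hmin hx, fun r ⟨hqr, hrb⟩ => ?_⟩
  have hr : r ∈ Icc a b := ⟨hq.1.trans hqr.le, hrb⟩
  refine hHq ▸ (hmin hr).lt_of_ne fun h => ?_
  exact hqr.not_ge (hgreatest ⟨hr, h.symm⟩)

lemma SemiCoercive.bddBelow_image_Iic (hH : Continuous H) (hsc : SemiCoercive H) (p : ℝ) :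
    BddBelow (H '' Iic p) := by
  obtain ⟨a, ha⟩ := eventually_atBot.mp (hsc.eventually_ge_atTop (H p))
  have hsub : Iic p ⊆ Iic a ∪ Icc a p := fun x hx => (le_or_gt x a).imp id fun h => ⟨h.le, hx⟩
  refine BddBelow.mono ((image_mono hsub).trans (image_union _ _ _).le) ?_
  exact (BddBelow.union ⟨H p, forall_mem_image.mpr ha⟩
    (isCompact_Icc.bddBelow_image hH.continuousOn))

lemma Hminus_le (hH : Continuous H) (hsc : SemiCoercive H) (hqp : q ≤ p) : Hminus H p ≤ H q :=
  csInf_le (hsc.bddBelow_image_Iic hH p) (mem_image_of_mem H hqp)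

lemma Hminus_le_self (hH : Continuous H) (hsc : SemiCoercive H) (p : ℝ) : Hminus H p ≤ H p :=
  Hminus_le hH hsc le_rfl

lemma SemiCoercive.pminus_le (hsc : SemiCoercive H) (p : ℝ) : pminus H p ≤ p := by
  obtain ⟨a, ha⟩ := eventually_atBot.mp (hsc.eventually_ge_atTop (H p))
  refine csSup_le ⟨min a (p - 1), ?_, ha _ (min_le_left _ _)⟩ fun q hq => hq.1.le
  linarith [min_le_right a (p - 1)]

lemma le_pplus (H : ℝ → ℝ) (p : ℝ) : (p : EReal) ≤ pplus H p := by
  refine le_sInf ?_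
  rintro _ ⟨q, ⟨hpq, -⟩, rfl⟩
  exact_mod_cast hpq.le

lemma pminus_eq_self_of_forall_le (h : ∀ q < p, H p ≤ H q) : pminus H p = p := by
  have hset : {q : ℝ | q < p ∧ H p ≤ H q} = Iio p := ext fun q => ⟨And.left, fun hq => ⟨hq, h q hq⟩⟩
  rw [pminus, hset, csSup_Iio]

lemma lt_of_pminus_lt_of_lt {r : ℝ} (hr : pminus H p < r) (hrp : r < p) : H r < H p := by
  by_contra! h
  exact hr.not_ge (le_csSup ⟨p, fun x hx => hx.1.le⟩ ⟨hrp, h⟩)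

lemma lt_of_lt_of_lt_pplus {r : ℝ} (hpr : p < r) (hr : (r : EReal) < pplus H p) : H p < H r := by
  by_contra! h
  exact hr.not_ge (sInf_le ⟨r, ⟨hpr, h⟩, rfl⟩)

lemma le_pplus_of_forall_lt {b : ℝ} (h : ∀ r, q < r → r < b → H q < H r) :
    (b : EReal) ≤ pplus H q := by
  refine le_sInf ?_
  rintro _ ⟨r, ⟨hqr, hrq⟩, rfl⟩
  by_contra! hrb
  exact hrq.not_gt (h r hqr (EReal.coe_lt_coe_iff.mp hrb))

lemma pminus_eq_self_of_lt_pplus (hH : Continuous H) (hsc : SemiCoercive H)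
    (hpp : (p : EReal) < pplus H p)
    (hcond : ∀ q, (ooMM H q ∩ ooUp H p).Nonempty → H p ≤ H q) : pminus H p = p := by
  by_contra hne
  obtain ⟨m, hm, hmp⟩ := exists_between ((hsc.pminus_le p).lt_of_ne hne)
  obtain ⟨p', hpp', hp'⟩ := EReal.exists_between_coe_real hpp
  have hpp' : p < p' := EReal.coe_lt_coe_iff.mp hpp'
  obtain ⟨q, hq, hmin, hright⟩ :=
    hH.continuousOn.exists_rightmost_isMinOn_Icc (a := m) (b := p') (by linarith)
  have hHq : H q < H p := (hmin ⟨le_rfl, by linarith⟩).trans_lt (lt_of_pminus_lt_of_lt hm hmp)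
  have hqp : q < p := by
    by_contra! hpq
    rcases hpq.eq_or_lt with rfl | hpq
    · exact hHq.false
    · exact hHq.not_gt (lt_of_lt_of_lt_pplus hpq ((EReal.coe_le_coe_iff.mpr hq.2).trans_lt hp'))
  have hq' : (p' : EReal) ≤ pplus H q :=
    le_pplus_of_forall_lt fun r hqr hrp' => hright r ⟨hqr, hrp'.le⟩
  have ht : ((p + p') / 2 : ℝ) < p' := by linarith
  have hmem : (p + p') / 2 ∈ ooMM H q ∩ ooUp H p :=
    ⟨⟨by linarith [hsc.pminus_le q], (EReal.coe_lt_coe_iff.mpr ht).trans_le hq'⟩,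
      by linarith, (EReal.coe_lt_coe_iff.mpr ht).trans hp'⟩
  exact (hcond q ⟨_, hmem⟩).not_gt hHq

lemma not_condS_Hminus (hH : Continuous H) (hsc : SemiCoercive H) (p : ℝ) :
    ¬ CondS H (Hminus H) p := fun ⟨hne, hle, _⟩ =>
  hne (pminus_eq_self_of_forall_le fun _ hq => hle.trans (Hminus_le hH hsc hq.le))

lemma condT_iff_of_le (hF : ∀ q, F q ≤ H q) :
    CondT H F p ↔ (p : EReal) < pplus H p ∧
      ∀ q, (ooMM H q ∩ ooUp H p).Nonempty → H p ≤ H q := by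
  refine ⟨fun ⟨hne, _, hcond⟩ => ⟨(le_pplus H p).lt_of_ne hne, fun q => hcond q (hF q)⟩,
    fun ⟨hpp, hcond⟩ => ⟨hpp.ne, hF p, fun q _ => hcond q⟩⟩

theorem stmt18 (H : ℝ → ℝ) (hH : Continuous H) (hcoer : Coercive H) :
    limiterOf H (Hminus H) = setA0 H := by
  ext p
  simp only [limiterOf, setA0, mem_ofPred_eq, or_iff_right (not_condS_Hminus hH hcoer.2 p),
    condT_iff_of_le (Hminus_le_self hH hcoer.2)]
  exact ⟨fun h => ⟨pminus_eq_self_of_lt_pplus hH hcoer.2 h.1 h.2, h⟩, And.right⟩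
end
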